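/- arXiv:2106.03757 — 5 statements merged into one kernel-verified Lean document; each statement's English description precedes it below -/
import Mathlib

section
/- Let A : ℝ → Matrix (Fin n) (Fin n) ℝ be a continuous family of real n × n matrices and let λ₀ ∈ ℝ be a simple eigenvalue of A(0) (a root of multiplicity one of the characteristic polynomial of A(0) over ℂ). Then there exist δ > 0 and ρ > 0 such that for every ε with |ε| < δ, every eigenvalue μ ∈ ℂ of A(ε) (viewed as a complex matrix) satisfying |μ − λ₀| < ρ is real. -/
/-!
If a real polynomial `p` has a non-real root `μ`, then `conj μ ≠ μ` is a root too, so the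
divided difference `(p μ - p (conj μ)) / (μ - conj μ)` vanishes. Written as a polynomial
expression in `μ`, `conj μ` and the coefficients of `p`, the divided difference is continuous
and equals `p' λ₀ ≠ 0` at `μ = conj μ = λ₀`; hence it cannot vanish for nearby polynomials and
nearby `μ`. The coefficients of the characteristic polynomial are polynomial in the matrix
entries, so this applies to `A ε`.
-/

open Polynomial

theorem Matrix.continuous_charpoly_coeff {X R n : Type*} [TopologicalSpace X] [CommRing R]
    [TopologicalSpace R] [IsTopologicalRing R] [Fintype n] [DecidableEq n]
    {A : X → Matrix n n R} (hA : Continuous A) (k : ℕ) :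
    Continuous fun x => (A x).charpoly.coeff k := by
  have h (x : X) : (A x).charpoly.coeff k =
      MvPolynomial.eval (fun ij => A x ij.1 ij.2) ((charpoly.univ R n).coeff k) :=
    (charpoly.univ_coeff_eval₂Hom n (RingHom.id R) (fun ij => A x ij.1 ij.2) k).symm
  simp only [h]
  exact (MvPolynomial.continuous_eval _).comp (by fun_prop)

namespace Polynomial

variable {R : Type*} [CommRing R]

def divDiff (p : R[X]) (x y : R) : R :=
  p.sum fun k a => a * ∑ j ∈ Finset.range k, x ^ j * y ^ (k - 1 - j)

theorem divDiff_mul_sub (p : R[X]) (x y : R) :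
    p.divDiff x y * (x - y) = p.eval x - p.eval y := by
  rw [divDiff, eval_eq_sum, eval_eq_sum, sum_def, sum_def, sum_def, Finset.sum_mul,
    ← Finset.sum_sub_distrib]
  refine Finset.sum_congr rfl fun k _ => ?_
  rw [mul_assoc, geom_sum₂_mul, mul_sub]

theorem divDiff_self (p : R[X]) (x : R) : p.divDiff x x = p.derivative.eval x := by
  rw [derivative_eval, divDiff]
  refine Finset.sum_congr rfl fun k _ => ?_
  have h (j) (hj : j ∈ Finset.range k) : x ^ j * x ^ (k - 1 - j) = x ^ (k - 1) := by
    rw [← pow_add, Nat.add_sub_cancel' (by have := Finset.mem_range.mp hj; omega)]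
  simp only [Finset.sum_congr rfl h, Finset.sum_const, Finset.card_range, nsmul_eq_mul, mul_assoc]

theorem continuous_divDiff [TopologicalSpace R] [IsTopologicalRing R] {X : Type*}
    [TopologicalSpace X] {P : X → R[X]} {N : ℕ} (hdeg : ∀ x, (P x).natDegree < N)
    (hP : ∀ k, Continuous fun x => (P x).coeff k) :
    Continuous fun q : X × R × R => (P q.1).divDiff q.2.1 q.2.2 := by
  have h (q : X × R × R) : (P q.1).divDiff q.2.1 q.2.2 =
      ∑ k ∈ Finset.range N, (P q.1).coeff k *
        ∑ j ∈ Finset.range k, q.2.1 ^ j * q.2.2 ^ (k - 1 - j) :=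
    sum_over_range' _ (fun _ => zero_mul _) N (hdeg q.1)
  simp only [h]
  exact continuous_finsetSum _ fun k _ => ((hP k).comp continuous_fst).mul (by fun_prop)

theorem eval_derivative_ne_zero_of_rootMultiplicity_eq_one {p : R[X]} {t : R}
    (h : p.rootMultiplicity t = 1) : p.derivative.eval t ≠ 0 := by
  have hp : p ≠ 0 := by rintro rfl; simp at h
  have hroot : p.IsRoot t := (rootMultiplicity_pos hp).mp (by omega)
  intro hder
  have := (one_lt_rootMultiplicity_iff_isRoot hp).mpr ⟨hroot, hder⟩
  omega

open ComplexConjugate Topology in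
theorem eventually_im_eq_zero_of_aeval_eq_zero {X : Type*} [TopologicalSpace X]
    {P : X → ℝ[X]} {N : ℕ} (hdeg : ∀ x, (P x).natDegree < N)
    (hP : ∀ k, Continuous fun x => (P x).coeff k) {x₀ : X} {r : ℝ}
    (hr : (P x₀).derivative.eval r ≠ 0) :
    ∀ᶠ q : X × ℂ in 𝓝 (x₀, (r : ℂ)), aeval q.2 (P q.1) = 0 → q.2.im = 0 := by
  set Q : X → ℂ[X] := fun x => (P x).map (algebraMap ℝ ℂ)
  have hF : Continuous fun q : X × ℂ × ℂ => (Q q.1).divDiff q.2.1 q.2.2 :=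
    continuous_divDiff (fun x => natDegree_map_le.trans_lt (hdeg x))
      (fun k => by simpa [Q, Function.comp_def] using Complex.continuous_ofReal.comp (hP k))
  have hF₀ : (Q x₀).divDiff r r ≠ 0 := by
    rw [divDiff_self, derivative_map, eval_map_algebraMap, ← Complex.coe_algebraMap,
      aeval_algebraMap_apply_eq_algebraMap_eval]
    exact (map_ne_zero_iff _ (algebraMap ℝ ℂ).injective).mpr hr
  have hconj : Continuous fun q : X × ℂ => (q.1, q.2, conj q.2) := by fun_prop
  filter_upwards [(hF.comp hconj).continuousAt.eventually_ne (by simpa using hF₀)]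
    with ⟨x, μ⟩ hne hμ
  have hμ' : (Q x).eval μ = 0 := by rwa [eval_map_algebraMap]
  have hconjμ : (Q x).eval (conj μ) = 0 := by rw [eval_map_algebraMap, aeval_conj, hμ, map_zero]
  have h := divDiff_mul_sub (Q x) μ (conj μ)
  rw [hμ', hconjμ, sub_zero, mul_eq_zero, sub_eq_zero] at h
  exact Complex.conj_eq_iff_im.mp (h.resolve_left hne).symm

end Polynomial

/-- Theorem 4, second bullet: a simple real eigenvalue of a continuous family of real
matrices stays real under small perturbations: all nearby eigenvalues of nearby matrices
are real. -/
theorem simple_real_eigenvalue_stays_real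
    (n : ℕ) (A : ℝ → Matrix (Fin n) (Fin n) ℝ)
    (hA : ∀ i j, Continuous fun ε => A ε i j)
    (lam₀ : ℝ)
    (hsimple : (((A 0).map (Complex.ofReal)).charpoly).rootMultiplicity (lam₀ : ℂ) = 1) :
    ∃ δ > (0 : ℝ), ∃ ρ > (0 : ℝ), ∀ ε : ℝ, |ε| < δ →
      ∀ μ : ℂ, (((A ε).map (Complex.ofReal)).charpoly).IsRoot μ →
        ‖μ - (lam₀ : ℂ)‖ < ρ → μ.im = 0 := by
  have hchar (ε : ℝ) : ((A ε).map Complex.ofReal).charpoly = (A ε).charpoly.map (algebraMap ℝ ℂ) :=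
    (A ε).charpoly_map (algebraMap ℝ ℂ)
  have hder : (A 0).charpoly.derivative.eval lam₀ ≠ 0 := by
    refine eval_derivative_ne_zero_of_rootMultiplicity_eq_one ?_
    rwa [eq_rootMultiplicity_map (algebraMap ℝ ℂ).injective, ← hchar]
  have hroots := eventually_im_eq_zero_of_aeval_eq_zero (N := n + 1)
    (fun ε => by simp [Matrix.charpoly_natDegree_eq_dim])
    (Matrix.continuous_charpoly_coeff (continuous_matrix hA)) hder
  obtain ⟨⟨δ, ρ⟩, ⟨hδ, hρ⟩, h⟩ :=
    (Metric.nhds_basis_ball.prod_nhds Metric.nhds_basis_ball).eventually_iff.mp hroots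
  refine ⟨δ, hδ, ρ, hρ, fun ε hε μ hμ hμρ => h (x := (ε, μ)) ⟨?_, ?_⟩ ?_⟩
  · simpa using hε
  · simpa [dist_eq_norm] using hμρ
  · rwa [hchar, IsRoot, eval_map_algebraMap] at hμ
end

section
/- Let p : ℝ → Polynomial ℂ be a family of monic polynomials of fixed degree n whose coefficients depend continuously on ε. Suppose there are sequences εₖ → 0 and complex numbers λₖ ≠ μₖ with p(εₖ)(λₖ) = 0, p(εₖ)(μₖ) = 0, λₖ → λ₀ and μₖ → λ₀. Then λ₀ is a root of p(0) of multiplicity at least 2; i.e. (X − λ₀)² divides p(0). -/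
open Polynomial Filter

/-- Polynomial lemma underlying Theorems 3 and 4: if two distinct roots of a continuous
family of monic polynomials of fixed degree merge as `ε → 0`, then the limit is a root of
multiplicity at least two of the limiting polynomial. -/
theorem merging_roots_give_multiple_root
    (n : ℕ) (p : ℝ → Polynomial ℂ)
    (hmonic : ∀ ε, (p ε).Monic)
    (hdeg : ∀ ε, (p ε).natDegree = n)
    (hcont : ∀ k : ℕ, Continuous fun ε => (p ε).coeff k)
    (e : ℕ → ℝ) (he : Tendsto e atTop (nhds 0))
    (lam mu : ℕ → ℂ) (hne : ∀ k, lam k ≠ mu k)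
    (hlamroot : ∀ k, (p (e k)).IsRoot (lam k))
    (hmuroot : ∀ k, (p (e k)).IsRoot (mu k))
    (lam₀ : ℂ)
    (hlamlim : Tendsto lam atTop (nhds lam₀))
    (hmulim : Tendsto mu atTop (nhds lam₀)) :
    (X - C lam₀) ^ 2 ∣ p 0 := by
  classical
  set F : ℝ × ℂ → ℂ := fun q => ∑ i ∈ Finset.range (n + 1), (p q.1).coeff i * q.2 ^ i with hF
  set G : ℝ × ℂ × ℂ → ℂ := fun q =>
    ∑ i ∈ Finset.range (n + 1),
      (p q.1).coeff i * ∑ j ∈ Finset.range i, q.2.1 ^ j * q.2.2 ^ (i - 1 - j) with hG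
  have hFeval : ∀ (ε : ℝ) (x : ℂ), F (ε, x) = (p ε).eval x := by
    intro ε x
    rw [eval_eq_sum_range, hdeg]
  have hFcont : Continuous F := by
    apply continuous_finset_sum
    intro i _
    exact ((hcont i).comp continuous_fst).mul (continuous_snd.pow i)
  have hGcont : Continuous G := by
    apply continuous_finset_sum
    intro i _
    refine ((hcont i).comp continuous_fst).mul (continuous_finset_sum _ fun j _ => ?_)
    exact ((continuous_fst.comp continuous_snd).pow j).mul
      ((continuous_snd.comp continuous_snd).pow (i - 1 - j))
  have hkey : ∀ (ε : ℝ) (x y : ℂ), G (ε, x, y) * (x - y) = F (ε, x) - F (ε, y) := by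
    intro ε x y
    simp only [hF, hG]
    rw [Finset.sum_mul, ← Finset.sum_sub_distrib]
    refine Finset.sum_congr rfl fun i _ => ?_
    rw [mul_assoc, geom_sum₂_mul, mul_sub]
  -- the root equations
  have hFlam : ∀ k, F (e k, lam k) = 0 := fun k => by
    rw [hFeval]; exact hlamroot k
  have hFmu : ∀ k, F (e k, mu k) = 0 := fun k => by
    rw [hFeval]; exact hmuroot k
  have hGk : ∀ k, G (e k, lam k, mu k) = 0 := by
    intro k
    have h := hkey (e k) (lam k) (mu k)
    rw [hFlam, hFmu, sub_zero] at h
    rcases mul_eq_zero.1 h with h' | h'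
    · exact h'
    · exact absurd (sub_eq_zero.1 h') (hne k)
  -- limits
  have hlim1 : Tendsto (fun k => (e k, lam k)) atTop (nhds ((0 : ℝ), lam₀)) :=
    he.prodMk_nhds hlamlim
  have hlim2 : Tendsto (fun k => (e k, lam k, mu k)) atTop (nhds ((0 : ℝ), lam₀, lam₀)) :=
    he.prodMk_nhds (hlamlim.prodMk_nhds hmulim)
  have hF0 : F (0, lam₀) = 0 := by
    have h1 : Tendsto (fun k => F (e k, lam k)) atTop (nhds (F (0, lam₀))) :=
      (hFcont.tendsto _).comp hlim1
    have h2 : Tendsto (fun k => F (e k, lam k)) atTop (nhds 0) := by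
      simpa only [hFlam] using (tendsto_const_nhds : Tendsto (fun _ : ℕ => (0 : ℂ)) atTop _)
    exact tendsto_nhds_unique h1 h2
  have hG0 : G (0, lam₀, lam₀) = 0 := by
    have h1 : Tendsto (fun k => G (e k, lam k, mu k)) atTop (nhds (G (0, lam₀, lam₀))) :=
      (hGcont.tendsto _).comp hlim2
    have h2 : Tendsto (fun k => G (e k, lam k, mu k)) atTop (nhds 0) := by
      simpa only [hGk] using (tendsto_const_nhds : Tendsto (fun _ : ℕ => (0 : ℂ)) atTop _)
    exact tendsto_nhds_unique h1 h2
  -- translate into statements about p 0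
  have hroot0 : (p 0).IsRoot lam₀ := by rw [IsRoot, ← hFeval]; exact hF0
  have hderivroot : (derivative (p 0)).IsRoot lam₀ := by
    have hdlt : (derivative (p 0)).natDegree < n + 1 :=
      lt_of_le_of_lt (natDegree_derivative_le (p 0)) (by rw [hdeg]; omega)
    have heval : (derivative (p 0)).eval lam₀ =
        ∑ i ∈ Finset.range (n + 1), (p 0).coeff (i + 1) * (i + 1) * lam₀ ^ i := by
      rw [eval_eq_sum_range' hdlt]
      refine Finset.sum_congr rfl fun i _ => ?_
      rw [coeff_derivative]
    have hGval : G (0, lam₀, lam₀) =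
        ∑ i ∈ Finset.range (n + 1), (p 0).coeff i * (i * lam₀ ^ (i - 1)) := by
      refine Finset.sum_congr rfl fun i _ => ?_
      congr 1
      have : ∀ j ∈ Finset.range i, lam₀ ^ j * lam₀ ^ (i - 1 - j) = lam₀ ^ (i - 1) := by
        intro j hj
        rw [Finset.mem_range] at hj
        rw [← pow_add]
        congr 1
        omega
      rw [Finset.sum_congr rfl this, Finset.sum_const, Finset.card_range, nsmul_eq_mul]
    have hsum : ∑ i ∈ Finset.range (n + 1), (p 0).coeff i * (i * lam₀ ^ (i - 1)) =
        ∑ i ∈ Finset.range (n + 1), (p 0).coeff (i + 1) * (i + 1) * lam₀ ^ i := by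
      rw [Finset.sum_range_succ' (fun i => (p 0).coeff i * (i * lam₀ ^ (i - 1))) n]
      rw [Finset.sum_range_succ (fun i => (p 0).coeff (i + 1) * (i + 1) * lam₀ ^ i) n]
      have hcoeff : (p 0).coeff (n + 1) = 0 :=
        coeff_eq_zero_of_natDegree_lt (by rw [hdeg]; omega)
      simp only [hcoeff, zero_mul, mul_zero, Nat.cast_zero, add_zero]
      refine Finset.sum_congr rfl fun i _ => ?_
      simp only [Nat.add_sub_cancel]
      push_cast
      ring
    rw [IsRoot, heval, ← hsum, ← hGval]
    exact hG0
  have hne0 : p 0 ≠ 0 := (hmonic 0).ne_zero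
  have hmult : 1 < (p 0).rootMultiplicity lam₀ :=
    (one_lt_rootMultiplicity_iff_isRoot hne0).2 ⟨hroot0, hderivroot⟩
  calc (X - C lam₀) ^ 2 ∣ (X - C lam₀) ^ ((p 0).rootMultiplicity lam₀) :=
        pow_dvd_pow _ (by omega)
    _ ∣ p 0 := pow_rootMultiplicity_dvd _ _
end

section
/- Let A : ℝ → Matrix (Fin n) (Fin n) ℂ be a family of complex n × n matrices each of whose entries is real-analytic at 0, and let λ₀ be a simple eigenvalue of A(0) (a root of multiplicity one of its characteristic polynomial). Then there exist δ > 0 and a real-analytic function λ : ℝ → ℂ on (−δ, δ) with λ(0) = λ₀ such that for every ε with |ε| < δ, λ(ε) is a simple eigenvalue of A(ε). -/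
/-!
A simple eigenvalue `λ₀` of `A 0` is a zero of `F (ε, z) = det (z - A ε)` at which `∂F/∂z` does
not vanish. `F` is jointly real-analytic, so the implicit function theorem yields the branch
`λ`; it is analytic because the analytic inverse function theorem applies to
`(ε, z) ↦ (F (ε, z), ε)`. The roots `λ ε` stay simple since `∂F/∂z`, being analytic, does not
vanish near `(0, λ₀)`.
-/

open Filter Polynomial Topology

theorem Polynomial.rootMultiplicity_eq_one_iff {R : Type*} [CommRing R] {p : R[X]}
    (hp : p ≠ 0) {t : R} :
    p.rootMultiplicity t = 1 ↔ p.IsRoot t ∧ ¬ p.derivative.IsRoot t := by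
  have hpos := rootMultiplicity_pos hp (x := t)
  have hgt := one_lt_rootMultiplicity_iff_isRoot hp (t := t)
  grind

section ImplicitFunction

variable {𝕜 : Type*} [NontriviallyNormedField 𝕜]
  {E₁ : Type*} [NormedAddCommGroup E₁] [NormedSpace 𝕜 E₁] [CompleteSpace E₁]
  {E₂ : Type*} [NormedAddCommGroup E₂] [NormedSpace 𝕜 E₂] [CompleteSpace E₂]
  {F : Type*} [NormedAddCommGroup F] [NormedSpace 𝕜 F] [CompleteSpace F]

theorem ImplicitFunctionData.analyticAt_implicitFunction
    {φ : ImplicitFunctionData 𝕜 E₁ E₂ F} (hl : AnalyticAt 𝕜 φ.leftFun φ.pt)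
    (hr : AnalyticAt 𝕜 φ.rightFun φ.pt) :
    AnalyticAt 𝕜 φ.implicitFunction.uncurry (φ.prodFun φ.pt) := by
  rw [implicitFunction, Function.uncurry_curry]
  exact φ.toOpenPartialHomeomorph.analyticAt_symm' φ.pt_mem_toOpenPartialHomeomorph_source
    (hl.prod hr) φ.hasStrictFDerivAt.hasFDerivAt.fderiv

theorem HasStrictFDerivAt.analyticAt_implicitFunctionOfProdDomain {u : E₁ × E₂}
    {f : E₁ × E₂ → F} {f'u : E₁ × E₂ →L[𝕜] F} (dfu : HasStrictFDerivAt f f'u u)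
    (if₂u : (f'u ∘L .inr 𝕜 E₁ E₂).IsInvertible) (hf : AnalyticAt 𝕜 f u) :
    AnalyticAt 𝕜 (dfu.implicitFunctionOfProdDomain if₂u) u.1 := by
  let φ := dfu.implicitFunctionDataOfProdDomain if₂u
  have hφ : AnalyticAt 𝕜 φ.implicitFunction.uncurry (f u, u.1) :=
    φ.analyticAt_implicitFunction hf analyticAt_fst
  exact analyticAt_snd.comp (hφ.comp (analyticAt_const.prod analyticAt_id))

end ImplicitFunction

section PolynomialFamily

variable {𝕜 : Type*} [NontriviallyNormedField 𝕜] {E : Type*} [NormedAddCommGroup E]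
  [NormedSpace 𝕜 E]

theorem AnalyticAt.matrix_det {ι A : Type*} [Fintype ι] [DecidableEq ι] [NormedCommRing A]
    [NormedAlgebra 𝕜 A] {M : E → Matrix ι ι A} {x : E}
    (hM : ∀ i j, AnalyticAt 𝕜 (fun y => M y i j) x) :
    AnalyticAt 𝕜 (fun y => (M y).det) x := by
  simp_rw [Matrix.det_apply']
  exact Finset.analyticAt_fun_sum _ fun σ _ =>
    analyticAt_const.mul (Finset.analyticAt_fun_prod _ fun i _ => hM _ _)

theorem analyticAt_charpoly_eval {ι A : Type*} [Fintype ι] [DecidableEq ι] [NormedCommRing A]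
    [NormedAlgebra 𝕜 A] {M : E → Matrix ι ι A} {x : E}
    (hM : ∀ i j, AnalyticAt 𝕜 (fun y => M y i j) x) (z : A) :
    AnalyticAt 𝕜 (fun v : E × A => (M v.1).charpoly.eval v.2) (x, z) := by
  simp_rw [Matrix.eval_charpoly]
  refine AnalyticAt.matrix_det fun i j => ?_
  simp only [Matrix.sub_apply, Matrix.scalar_apply, Matrix.diagonal_apply]
  refine .sub ?_ ((hM i j).comp_of_eq analyticAt_fst rfl)
  split_ifs
  exacts [analyticAt_snd, analyticAt_const]

variable {𝕜' : Type*} [NontriviallyNormedField 𝕜'] [NormedAlgebra 𝕜 𝕜']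

theorem fderiv_polynomial_eval_apply_inr {P : E → 𝕜'[X]} {v : E × 𝕜'}
    (h : DifferentiableAt 𝕜 (fun w : E × 𝕜' => (P w.1).eval w.2) v) (z : 𝕜') :
    fderiv 𝕜 (fun w : E × 𝕜' => (P w.1).eval w.2) v (0, z) =
      z * (P v.1).derivative.eval v.2 := by
  have h₁ := h.hasFDerivAt.comp v.2 (hasFDerivAt_prodMk_right (𝕜 := 𝕜) v.1 v.2)
  have h₂ := ((P v.1).hasDerivAt v.2).hasFDerivAt.restrictScalars 𝕜
  simpa using congr($(h₁.unique h₂) z)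

theorem AnalyticAt.polynomial_derivative_eval [CompleteSpace 𝕜'] {P : E → 𝕜'[X]}
    {u : E × 𝕜'} (h : AnalyticAt 𝕜 (fun v : E × 𝕜' => (P v.1).eval v.2) u) :
    AnalyticAt 𝕜 (fun v : E × 𝕜' => (P v.1).derivative.eval v.2) u := by
  refine (((ContinuousLinearMap.apply 𝕜 𝕜' ((0 : E), (1 : 𝕜'))).analyticAt _).comp
    h.fderiv).congr ?_
  filter_upwards [h.eventually_analyticAt] with v hv
  simp [fderiv_polynomial_eval_apply_inr hv.differentiableAt]

theorem exists_analyticAt_simple_root [CompleteSpace E] [CompleteSpace 𝕜'] {P : E → 𝕜'[X]}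
    {x₀ : E} {z₀ : 𝕜'}
    (hP : AnalyticAt 𝕜 (fun v : E × 𝕜' => (P v.1).eval v.2) (x₀, z₀))
    (hroot : (P x₀).IsRoot z₀) (hsimple : ¬ (P x₀).derivative.IsRoot z₀) :
    ∃ r : E → 𝕜', AnalyticAt 𝕜 r x₀ ∧ r x₀ = z₀ ∧
      ∀ᶠ x in 𝓝 x₀, (P x).IsRoot (r x) ∧ ¬ (P x).derivative.IsRoot (r x) := by
  have dP : HasStrictFDerivAt _ _ (x₀, z₀) := hP.hasStrictFDerivAt
  have hinv : (fderiv 𝕜 (fun v : E × 𝕜' => (P v.1).eval v.2) (x₀, z₀) ∘L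
      .inr 𝕜 E 𝕜').IsInvertible :=
    ⟨(ContinuousLinearEquiv.unitsEquivAut 𝕜' (.mk0 _ hsimple)).restrictScalars 𝕜, by
      ext z
      exact (fderiv_polynomial_eval_apply_inr hP.differentiableAt z).symm⟩
  have hr := dP.tendsto_implicitFunctionOfProdDomain hinv
  refine ⟨_, dP.analyticAt_implicitFunctionOfProdDomain hinv hP, eq_of_tendsto_nhds hr, ?_⟩
  have hsimple_near := (tendsto_id.prodMk_nhds hr).eventually
    (hP.polynomial_derivative_eval.continuousAt.eventually_ne hsimple)
  filter_upwards [dP.eventually_apply_implicitFunctionOfProdDomain hinv, hsimple_near]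
    with x hx hx'
  exact ⟨hx.trans hroot, hx'⟩

end PolynomialFamily

/-- Theorem 1, first part: a simple eigenvalue of an analytically perturbed matrix
continues as a real-analytic eigenvalue branch consisting of simple eigenvalues. -/
theorem simple_eigenvalue_analytic_continuation
    (n : ℕ) (A : ℝ → Matrix (Fin n) (Fin n) ℂ)
    (hA : ∀ i j, AnalyticAt ℝ (fun ε => A ε i j) 0)
    (lam₀ : ℂ) (hsimple : ((A 0).charpoly).rootMultiplicity lam₀ = 1) :
    ∃ δ > (0 : ℝ), ∃ lam : ℝ → ℂ,
      AnalyticOnNhd ℝ lam (Set.Ioo (-δ) δ) ∧ lam 0 = lam₀ ∧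
      ∀ ε : ℝ, |ε| < δ → ((A ε).charpoly).rootMultiplicity (lam ε) = 1 := by
  have hcharpoly (ε : ℝ) : (A ε).charpoly ≠ 0 := (A ε).charpoly_monic.ne_zero
  rw [rootMultiplicity_eq_one_iff (hcharpoly 0)] at hsimple
  obtain ⟨lam, hlam, hlam₀, hsimple_near⟩ :=
    exists_analyticAt_simple_root (P := fun ε => (A ε).charpoly)
      (analyticAt_charpoly_eval hA lam₀) hsimple.1 hsimple.2
  obtain ⟨δ, hδ, hball⟩ :=
    Metric.eventually_nhds_iff.mp (hlam.eventually_analyticAt.and hsimple_near)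
  have hmem {ε : ℝ} (hε : |ε| < δ) : dist ε 0 < δ := by rwa [Real.dist_eq, sub_zero]
  refine ⟨δ, hδ, lam, fun ε hε => (hball (hmem (abs_lt.mpr hε))).1, hlam₀,
    fun ε hε => ?_⟩
  rw [rootMultiplicity_eq_one_iff (hcharpoly ε)]
  exact (hball (hmem hε)).2
end

section
/- Let H : ℝ → Matrix (Fin 2) (Fin 2) ℂ be a family of 2 × 2 complex matrices each of whose entries is real-analytic at 0, and suppose H(0) = λ₀·I for some λ₀ ∈ ℂ (the degenerate matrix is a scalar multiple of the identity, hence non-defective). Then there exist C > 0 and δ > 0 such that for every r with |r| < δ, any two eigenvalues λ, μ of H(r) satisfy |λ − μ| ≤ C·|r|. -/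
/-!
By Gershgorin's circle theorem every eigenvalue of `H r` lies within the total size of the
entries of `H r - λ₀ • 1 = H r - H 0` from `λ₀`. The entries are differentiable at `0`, so this
quantity is `O(r)`, and two eigenvalues, both `O(r)`-close to `λ₀`, are `O(r)`-close to each other.
-/

open Polynomial Filter Topology Asymptotics

theorem Matrix.norm_sub_le_of_isRoot_charpoly {K n : Type*} [NormedField K] [Fintype n]
    [DecidableEq n] (A : Matrix n n K) (c : K) {μ : K} (hμ : A.charpoly.IsRoot μ) :
    ‖μ - c‖ ≤ ∑ i, ∑ j, ‖(A - c • 1) i j‖ := by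
  have hμ' : Module.End.HasEigenvalue (Matrix.toLin' A) μ := by
    rwa [Module.End.hasEigenvalue_iff_isRoot_charpoly, Matrix.charpoly_toLin']
  obtain ⟨k, hk⟩ := eigenvalue_mem_ball hμ'
  rw [mem_closedBall_iff_norm] at hk
  calc ‖μ - c‖ ≤ ‖μ - A k k‖ + ‖A k k - c‖ := norm_sub_le_norm_sub_add_norm_sub _ _ _
    _ ≤ ∑ j ∈ Finset.univ.erase k, ‖A k j‖ + ‖A k k - c‖ := by gcongr
    _ = ∑ j, ‖(A - c • 1) k j‖ := by
      rw [← Finset.sum_erase_add _ _ (Finset.mem_univ k)]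
      congr 1
      · refine Finset.sum_congr rfl fun j hj => ?_
        simp [Matrix.one_apply_ne' (Finset.ne_of_mem_erase hj)]
      · simp
    _ ≤ ∑ i, ∑ j, ‖(A - c • 1) i j‖ :=
      Finset.single_le_sum (f := fun i => ∑ j, ‖(A - c • 1) i j‖)
        (fun i _ => Finset.sum_nonneg fun j _ => norm_nonneg _) (Finset.mem_univ k)

theorem Asymptotics.IsBigO.exists_bound_nhds_zero {E : Type*} [SeminormedAddCommGroup E]
    {f : ℝ → E} (h : f =O[𝓝 0] fun r => r) :
    ∃ C > (0 : ℝ), ∃ δ > (0 : ℝ), ∀ r : ℝ, |r| < δ → ‖f r‖ ≤ C * |r| := by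
  obtain ⟨C, hC, hbound⟩ := h.exists_pos
  obtain ⟨δ, hδ, hball⟩ := Metric.eventually_nhds_iff.mp hbound.bound
  exact ⟨C, hC, δ, hδ, fun r hr => hball (by simpa [Real.dist_eq] using hr)⟩

/-- Two-state model at a non-defective degeneracy (`H(0) = λ₀·I`): the gap between the
eigenvalues of `H(r)` grows at most linearly in `|r|` near the degeneracy. -/
theorem nondefective_degeneracy_linear_gap
    (H : ℝ → Matrix (Fin 2) (Fin 2) ℂ)
    (hA : ∀ i j, AnalyticAt ℝ (fun r => H r i j) 0)
    (lam₀ : ℂ) (h0 : H 0 = lam₀ • (1 : Matrix (Fin 2) (Fin 2) ℂ)) :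
    ∃ C > (0 : ℝ), ∃ δ > (0 : ℝ), ∀ r : ℝ, |r| < δ →
      ∀ lam mu : ℂ, ((H r).charpoly).IsRoot lam → ((H r).charpoly).IsRoot mu →
        ‖lam - mu‖ ≤ C * |r| := by
  set E : ℝ → ℝ := fun r => ∑ i, ∑ j, ‖(H r - H 0) i j‖
  have hE : E =O[𝓝 0] fun r => r := by
    refine IsBigO.fun_sum fun i _ => IsBigO.fun_sum fun j _ => ?_
    simpa using ((hA i j).differentiableAt.isBigO_sub).norm_left
  obtain ⟨C, hC, δ, hδ, hbound⟩ := hE.exists_bound_nhds_zero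
  refine ⟨2 * C, by positivity, δ, hδ, fun r hr lam mu hlam hmu => ?_⟩
  have hroot : ∀ ν, (H r).charpoly.IsRoot ν → ‖ν - lam₀‖ ≤ C * |r| := fun ν hν =>
    calc ‖ν - lam₀‖ ≤ E r := by
          simpa only [E, h0] using (H r).norm_sub_le_of_isRoot_charpoly lam₀ hν
      _ ≤ C * |r| := (le_abs_self _).trans (hbound r hr)
  calc ‖lam - mu‖ ≤ ‖lam - lam₀‖ + ‖mu - lam₀‖ := by
        simpa only [dist_eq_norm] using dist_triangle_right lam mu lam₀
    _ ≤ C * |r| + C * |r| := add_le_add (hroot lam hlam) (hroot mu hmu)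
    _ = 2 * C * |r| := by ring
end

section
/- Let H : ℝ → Matrix (Fin 2) (Fin 2) ℂ be a family of 2 × 2 complex matrices each of whose entries is differentiable at 0, and define the discriminant d(r) = (H₁₁(r) − H₂₂(r))² + 4·H₁₂(r)·H₂₁(r). Suppose d(0) = 0 and d'(0) ≠ 0. Then any two eigenvalues λ(r), μ(r) of H(r) satisfy |λ(r) − μ(r)|² = |d(r)|, and consequently |λ(r) − μ(r)| / √|r| → √|d'(0)| as r → 0; in particular the eigenvalue gap behaves like a square root of the distance from the degeneracy and is not differentiable at r = 0. -/
/-!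
The characteristic polynomial `(X - λ)(X - μ)` of `H r` has discriminant `(λ - μ)²`, while the
discriminant of a `2 × 2` matrix is `(H₁₁ - H₂₂)² + 4 H₁₂ H₂₁`; hence `(λ - μ)² = d`, and the gap
is `√‖d r‖`. Since `d` vanishes at `0` with nonzero derivative, `‖d r‖ / |r| → ‖d'(0)‖`, so the gap
divided by `√|r|` tends to `√‖d'(0)‖ ≠ 0`. A function differentiable at `0` and vanishing there
is `O(r) = o(√|r|)`, so the gap cannot be differentiable at `0`.
-/

open Polynomial Filter Topology Asymptotics

theorem Polynomial.discr_X_sub_C_mul_X_sub_C {R : Type*} [CommRing R] [Nontrivial R] (a b : R) :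
    ((X - C a) * (X - C b)).discr = (a - b) ^ 2 := by
  have hquad : (X - C a) * (X - C b) = C 1 * X ^ 2 + C (-(a + b)) * X + C (a * b) := by
    simp only [map_one, map_neg, map_add, map_mul]
    ring
  rw [hquad, discr_of_degree_eq_two (degree_quadratic one_ne_zero)]
  simp only [coeff_add, coeff_C_mul, coeff_X_pow, coeff_X, coeff_C]
  norm_num
  ring

theorem Matrix.discr_fin_two_eq {R : Type*} [CommRing R] (A : Matrix (Fin 2) (Fin 2) R) :
    A.discr = (A 0 0 - A 1 1) ^ 2 + 4 * A 0 1 * A 1 0 := by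
  rw [Matrix.discr_fin_two, Matrix.trace_fin_two, Matrix.det_fin_two]
  ring

theorem HasDerivAt.tendsto_sqrt_norm_div_sqrt_abs {E : Type*} [NormedAddCommGroup E]
    [NormedSpace ℝ E] {f : ℝ → E} {f' : E} (hf : HasDerivAt f f' 0) (h0 : f 0 = 0) :
    Tendsto (fun r => √‖f r‖ / √|r|) (𝓝[≠] 0) (𝓝 √‖f'‖) := by
  refine (hasDerivAt_iff_tendsto_slope.mp hf).norm.sqrt.congr fun r => ?_
  rw [slope_def_module, h0, sub_zero, sub_zero, norm_smul, norm_inv, Real.norm_eq_abs,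
    inv_mul_eq_div, Real.sqrt_div' _ (abs_nonneg r)]

theorem isLittleO_id_sqrt_abs_nhds_zero : (fun x : ℝ => x) =o[𝓝 0] fun x => √|x| := by
  have hsqrt : (fun x : ℝ => √|x|) =o[𝓝 0] fun _ => (1 : ℝ) := by
    rw [isLittleO_one_iff]
    simpa using continuous_abs.sqrt.tendsto (0 : ℝ)
  refine IsBigO.trans_isLittleO ?_ (by simpa using hsqrt.mul_isBigO (isBigO_refl _ _))
  refine isBigO_of_le _ fun x => ?_
  simp [Real.mul_self_sqrt (abs_nonneg x)]

theorem HasDerivAt.tendsto_div_sqrt_abs_nhds_zero {g : ℝ → ℝ} {g' : ℝ} (hg : HasDerivAt g g' 0)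
    (h0 : g 0 = 0) : Tendsto (fun r => g r / √|r|) (𝓝 0) (𝓝 0) := by
  have hg_small := hg.isBigO_sub.trans_isLittleO (by simpa using isLittleO_id_sqrt_abs_nhds_zero)
  simpa [h0] using hg_small.tendsto_div_nhds_zero

theorem not_differentiableAt_zero_of_tendsto_div_sqrt_abs {g : ℝ → ℝ} {L : ℝ}
    (h : Tendsto (fun r => g r / √|r|) (𝓝[≠] 0) (𝓝 L)) (hL : L ≠ 0) (h0 : g 0 = 0) :
    ¬ DifferentiableAt ℝ g 0 := fun hg =>
  hL <| tendsto_nhds_unique h <|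
    (hg.hasDerivAt.tendsto_div_sqrt_abs_nhds_zero h0).mono_left nhdsWithin_le_nhds

/-- Square-root behaviour at a defective degeneracy in the two-state model: if the
discriminant `d(r) = (H₁₁−H₂₂)² + 4·H₁₂·H₂₁` vanishes to first order at `r = 0`
(`d(0) = 0`, `d'(0) ≠ 0`), then the gap between the two eigenvalues of `H(r)` satisfies
`|λ(r) − μ(r)|² = |d(r)|`, behaves like `√|d'(0)|·√|r|` as `r → 0`, and in particular
is not differentiable at `r = 0`. -/
theorem defective_degeneracy_square_root_gap
    (H : ℝ → Matrix (Fin 2) (Fin 2) ℂ)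
    (hdiff : ∀ i j, DifferentiableAt ℝ (fun r => H r i j) 0)
    (d : ℝ → ℂ)
    (hd : ∀ r, d r = (H r 0 0 - H r 1 1) ^ 2 + 4 * H r 0 1 * H r 1 0)
    (hd0 : d 0 = 0) (hd' : deriv d 0 ≠ 0)
    (lam mu : ℝ → ℂ)
    (hroots : ∀ r, (H r).charpoly = (X - C (lam r)) * (X - C (mu r))) :
    (∀ r : ℝ, ‖lam r - mu r‖ ^ 2 = ‖d r‖) ∧
    Tendsto (fun r => ‖lam r - mu r‖ / Real.sqrt |r|)
      (nhdsWithin 0 {(0 : ℝ)}ᶜ) (nhds (Real.sqrt (‖deriv d 0‖))) ∧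
    ¬ DifferentiableAt ℝ (fun r => ‖lam r - mu r‖) 0 := by
  have hsq : ∀ r, (lam r - mu r) ^ 2 = d r := fun r => by
    rw [hd, ← Matrix.discr_fin_two_eq, Matrix.discr, hroots, discr_X_sub_C_mul_X_sub_C]
  have hnorm_sq : ∀ r, ‖lam r - mu r‖ ^ 2 = ‖d r‖ := fun r => by rw [← hsq, norm_pow]
  have hgap : ∀ r, ‖lam r - mu r‖ = √‖d r‖ := fun r => by
    rw [← hnorm_sq, Real.sqrt_sq (norm_nonneg _)]
  have hd_diff : DifferentiableAt ℝ d 0 := by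
    rw [funext hd]
    have := hdiff 0 0; have := hdiff 1 1; have := hdiff 0 1; have := hdiff 1 0
    fun_prop
  have hlim : Tendsto (fun r => ‖lam r - mu r‖ / √|r|) (𝓝[≠] 0) (𝓝 √‖deriv d 0‖) := by
    simpa only [hgap] using hd_diff.hasDerivAt.tendsto_sqrt_norm_div_sqrt_abs hd0
  refine ⟨hnorm_sq, hlim, not_differentiableAt_zero_of_tendsto_div_sqrt_abs hlim ?_ ?_⟩
  · simpa using hd'
  · simp [hgap, hd0]
end
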